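/- arXiv:2010.09274 — 4 statements merged into one kernel-verified Lean document; each statement's English description precedes it below -/
import Mathlib

section
/- The set of α ∈ (0, π/3) such that both cos α and √3·sin α are rational is dense in (0, π/3). -/
open Real

noncomputable def fparam (t : ℝ) : ℝ := Real.arccos ((3 - t^2)/(3 + t^2))

lemma fparam_cont : Continuous fparam := by
  apply Real.continuous_arccos.comp
  exact Continuous.div (by continuity) (by continuity) (fun t => by positivity)

lemma x_mem {t : ℝ} (ht : t ∈ Set.Ioo (0:ℝ) 1) :
    (3 - t^2)/(3 + t^2) ∈ Set.Ioo (1/2 : ℝ) 1 := by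
  obtain ⟨h0, h1⟩ := ht
  have hd : (0:ℝ) < 3 + t^2 := by positivity
  constructor
  · rw [lt_div_iff₀ hd]; nlinarith
  · rw [div_lt_one hd]; nlinarith

lemma arccos_half : Real.arccos (1/2) = π/3 := by
  rw [← Real.cos_pi_div_three]
  exact Real.arccos_cos (by positivity) (by linarith [Real.pi_pos])

lemma fparam_mem {t : ℝ} (ht : t ∈ Set.Ioo (0:ℝ) 1) :
    fparam t ∈ Set.Ioo (0:ℝ) (π/3) := by
  have hx := x_mem ht
  constructor
  · exact Real.arccos_pos.mpr hx.2
  · rw [← arccos_half]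
    exact Real.strictAntiOn_arccos (by constructor <;> norm_num)
      ⟨by linarith [hx.1], le_of_lt hx.2⟩ hx.1

lemma cos_fparam {t : ℝ} (ht : t ∈ Set.Ioo (0:ℝ) 1) :
    Real.cos (fparam t) = (3 - t^2)/(3 + t^2) := by
  have hx := x_mem ht
  exact Real.cos_arccos (by linarith [hx.1]) (le_of_lt hx.2)

lemma sin_fparam {t : ℝ} (ht : t ∈ Set.Ioo (0:ℝ) 1) :
    Real.sqrt 3 * Real.sin (fparam t) = 6*t/(3 + t^2) := by
  have hd : (0:ℝ) < 3 + t^2 := by positivity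
  rw [fparam, Real.sin_arccos, ← Real.sqrt_mul (by norm_num : (0:ℝ) ≤ 3)]
  have h1 : 3 * (1 - ((3 - t^2)/(3 + t^2))^2) = (6*t/(3+t^2))^2 := by
    field_simp; ring
  rw [h1, Real.sqrt_sq (by have := ht.1; positivity)]

/-- The set of `α ∈ (0, π/3)` such that both `cos α` and `√3 sin α` are rational
is dense in `(0, π/3)`. -/
theorem stmt2 :
    Set.Ioo (0:ℝ) (π/3) ⊆ closure {α : ℝ | α ∈ Set.Ioo (0:ℝ) (π/3) ∧
      (∃ q : ℚ, Real.cos α = q) ∧ (∃ r : ℚ, Real.sqrt 3 * Real.sin α = r)} := by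
  intro α hα
  set S := {α : ℝ | α ∈ Set.Ioo (0:ℝ) (π/3) ∧
      (∃ q : ℚ, Real.cos α = q) ∧ (∃ r : ℚ, Real.sqrt 3 * Real.sin α = r)}
  obtain ⟨hα0, hα1⟩ := hα
  have hcos_half : Real.cos α > 1/2 := by
    rw [← Real.cos_pi_div_three]
    exact Real.cos_lt_cos_of_nonneg_of_le_pi (le_of_lt hα0)
      (by linarith [Real.pi_pos]) hα1
  have hc1 : 1 + Real.cos α > 0 := by linarith
  set t₀ : ℝ := Real.sqrt 3 * Real.sin α / (1 + Real.cos α) with ht₀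
  have hsin : Real.sin α > 0 := Real.sin_pos_of_pos_of_lt_pi hα0 (by linarith [Real.pi_pos])
  have h3 : (Real.sqrt 3)^2 = 3 := Real.sq_sqrt (by norm_num)
  have hs2 : Real.sin α ^2 = 1 - Real.cos α^2 := by
    nlinarith [Real.sin_sq_add_cos_sq α]
  have ht2 : t₀^2 = 3*(1 - Real.cos α)/(1 + Real.cos α) := by
    rw [ht₀, div_pow, mul_pow, h3, hs2]
    rw [show 1 - Real.cos α^2 = (1 - Real.cos α)*(1 + Real.cos α) by ring]
    field_simp
  have ht0 : t₀ ∈ Set.Ioo (0:ℝ) 1 := by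
    constructor
    · exact div_pos (by positivity) hc1
    · rw [div_lt_one hc1]
      nlinarith [Real.sin_sq_add_cos_sq α, Real.sqrt_nonneg 3]
  have hft0 : fparam t₀ = α := by
    have hx : (3 - t₀^2)/(3 + t₀^2) = Real.cos α := by
      rw [ht2]; field_simp; ring
    rw [fparam, hx, Real.arccos_cos (le_of_lt hα0) (by linarith [Real.pi_pos])]
  have hQ : Dense (Set.range ((↑) : ℚ → ℝ)) := Rat.denseRange_cast
  have h1 : fparam '' (Set.Ioo (0:ℝ) 1 ∩ Set.range ((↑) : ℚ → ℝ)) ⊆ S := by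
    rintro _ ⟨t, ⟨ht, q, rfl⟩, rfl⟩
    refine ⟨fparam_mem ht, ⟨(3 - q^2)/(3 + q^2), ?_⟩, ⟨6*q/(3 + q^2), ?_⟩⟩
    · rw [cos_fparam ht]; push_cast; ring
    · rw [sin_fparam ht]; push_cast; ring
  have hmem : α ∈ closure (fparam '' (Set.Ioo (0:ℝ) 1 ∩ Set.range ((↑) : ℚ → ℝ))) := by
    rw [← hft0]
    exact (image_closure_subset_closure_image fparam_cont)
      ⟨t₀, hQ.open_subset_closure_inter isOpen_Ioo ht0, rfl⟩
  exact closure_mono h1 hmem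
end

section
/- Suppose p, q, p′ are positive integers with no common divisor satisfying 3p² + p′² = 3q², and cos α = p/q, √3 sin α = p′/q for some α ∈ (0, π/3). Let d = gcd(2(p+q), p+q+p′), a = 2(p+q)/d, b = (p+q+p′)/d. Then a and b are coprime integers satisfying cos α = (a² + 2ab − 2b²)/(2(a² − ab + b²)) and √3 sin α = 3a(2b − a)/(2(a² − ab + b²)). -/
open Real

/-!
With `A = 2(p+q)` and `B = p+q+p′`, the relation `p′² = 3(q-p)(q+p)` gives
`A² + 2AB - 2B² = 12(p+q)p`, `3A(2B - A) = 12(p+q)p′` and `2(A² - AB + B²) = 12(p+q)q`.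
Both quotients are homogeneous of degree zero in `(A, B)`, so dividing `A, B` by their gcd `d`
changes neither; and `A/d, B/d` are coprime.
-/

section QuadraticForms

variable {R : Type*} [CommRing R] {p q p' a b d : R}

theorem cos_numerator_mul_sq (h : 3*p^2 + p'^2 = 3*q^2) (ha : a*d = 2*(p+q))
    (hb : b*d = p+q+p') : (a^2 + 2*a*b - 2*b^2) * d^2 = 12*(p+q)*p := by
  rw [show (a^2 + 2*a*b - 2*b^2) * d^2 = (a*d)^2 + 2*(a*d)*(b*d) - 2*(b*d)^2 by ring, ha, hb]
  linear_combination -2 * h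

theorem sin_numerator_mul_sq (ha : a*d = 2*(p+q)) (hb : b*d = p+q+p') :
    3*a*(2*b - a) * d^2 = 12*(p+q)*p' := by
  rw [show 3*a*(2*b - a) * d^2 = 3*(a*d)*(2*(b*d) - a*d) by ring, ha, hb]
  ring

theorem denominator_mul_sq (h : 3*p^2 + p'^2 = 3*q^2) (ha : a*d = 2*(p+q))
    (hb : b*d = p+q+p') : 2*(a^2 - a*b + b^2) * d^2 = 12*(p+q)*q := by
  rw [show 2*(a^2 - a*b + b^2) * d^2 = 2*((a*d)^2 - (a*d)*(b*d) + (b*d)^2) by ring, ha, hb]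
  linear_combination 2 * h

end QuadraticForms

section Parametrization

variable {K : Type*} [Field K] [CharZero K] {p q p' a b d : K}

theorem denominator_ne_zero (h : 3*p^2 + p'^2 = 3*q^2) (ha : a*d = 2*(p+q))
    (hb : b*d = p+q+p') (hpq : p + q ≠ 0) (hq : q ≠ 0) : 2*(a^2 - a*b + b^2) ≠ 0 := by
  intro h0
  have := denominator_mul_sq h ha hb
  rw [h0, zero_mul] at this
  exact mul_ne_zero (mul_ne_zero (by norm_num) hpq) hq this.symm

theorem div_eq_cos_param (h : 3*p^2 + p'^2 = 3*q^2) (ha : a*d = 2*(p+q))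
    (hb : b*d = p+q+p') (hpq : p + q ≠ 0) (hq : q ≠ 0) (hd : d ≠ 0) :
    p / q = (a^2 + 2*a*b - 2*b^2) / (2*(a^2 - a*b + b^2)) := by
  rw [div_eq_div_iff hq (denominator_ne_zero h ha hb hpq hq)]
  refine mul_right_cancel₀ (pow_ne_zero 2 hd) ?_
  linear_combination p * denominator_mul_sq h ha hb - q * cos_numerator_mul_sq h ha hb

theorem div_eq_sin_param (h : 3*p^2 + p'^2 = 3*q^2) (ha : a*d = 2*(p+q))
    (hb : b*d = p+q+p') (hpq : p + q ≠ 0) (hq : q ≠ 0) (hd : d ≠ 0) :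
    p' / q = 3*a*(2*b - a) / (2*(a^2 - a*b + b^2)) := by
  rw [div_eq_div_iff hq (denominator_ne_zero h ha hb hpq hq)]
  refine mul_right_cancel₀ (pow_ne_zero 2 hd) ?_
  linear_combination p' * denominator_mul_sq h ha hb - q * sin_numerator_mul_sq ha hb

end Parametrization

theorem stmt4_general (p q p' : ℤ) (hp : 0 < p) (hq : 0 < q)
    (hpyth : 3*p^2 + p'^2 = 3*q^2)
    (α : ℝ)
    (hcos : Real.cos α = (p:ℝ)/(q:ℝ))
    (hsin : Real.sqrt 3 * Real.sin α = (p':ℝ)/(q:ℝ))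
    (d a b : ℤ) (hd : d = Int.gcd (2*(p+q)) (p+q+p'))
    (ha : a = 2*(p+q) / d) (hb : b = (p+q+p') / d) :
    IsCoprime a b ∧
    Real.cos α = ((a:ℝ)^2 + 2*(a:ℝ)*(b:ℝ) - 2*(b:ℝ)^2) /
      (2*((a:ℝ)^2 - (a:ℝ)*(b:ℝ) + (b:ℝ)^2)) ∧
    Real.sqrt 3 * Real.sin α = 3*(a:ℝ)*(2*(b:ℝ) - (a:ℝ)) /
      (2*((a:ℝ)^2 - (a:ℝ)*(b:ℝ) + (b:ℝ)^2)) := by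
  have hgcd_pos : 0 < Int.gcd (2*(p+q)) (p+q+p') := Int.gcd_pos_of_ne_zero_left _ (by omega)
  have hcop : IsCoprime a b := by
    rw [Int.isCoprime_iff_gcd_eq_one, ha, hb, hd]
    exact Int.gcd_div_gcd_div_gcd hgcd_pos
  have hA : a * d = 2*(p+q) := ha ▸ Int.ediv_mul_cancel (hd ▸ Int.gcd_dvd_left _ _)
  have hB : b * d = p+q+p' := hb ▸ Int.ediv_mul_cancel (hd ▸ Int.gcd_dvd_right _ _)
  have hpythR : 3*(p:ℝ)^2 + (p':ℝ)^2 = 3*(q:ℝ)^2 := by exact_mod_cast hpyth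
  have hAR : (a:ℝ) * d = 2*(p+q) := by exact_mod_cast hA
  have hBR : (b:ℝ) * d = p+q+p' := by exact_mod_cast hB
  have hpqR : (p:ℝ) + q ≠ 0 := by positivity
  have hqR : (q:ℝ) ≠ 0 := by positivity
  have hdR : (d:ℝ) ≠ 0 := by rw [hd]; exact_mod_cast hgcd_pos.ne'
  exact ⟨hcop, hcos.trans (div_eq_cos_param hpythR hAR hBR hpqR hqR hdR),
    hsin.trans (div_eq_sin_param hpythR hAR hBR hpqR hqR hdR)⟩

/-- From positive integers `p, q, p′` with no common divisor satisfying `3p² + p′² = 3q²`,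
with `cos α = p/q`, `√3 sin α = p′/q`, `d = gcd(2(p+q), p+q+p′)`, `a = 2(p+q)/d`,
`b = (p+q+p′)/d`, the integers `a, b` are coprime and give the rational parametrization
of `cos α` and `√3 sin α`. -/
theorem stmt4 (p q p' : ℤ) (hp : 0 < p) (hq : 0 < q) (hp' : 0 < p')
    (hgcd : Int.gcd (Int.gcd p q) p' = 1)
    (hpyth : 3*p^2 + p'^2 = 3*q^2)
    (α : ℝ) (hα0 : 0 < α) (hα1 : α < π/3)
    (hcos : Real.cos α = (p:ℝ)/(q:ℝ))
    (hsin : Real.sqrt 3 * Real.sin α = (p':ℝ)/(q:ℝ))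
    (d a b : ℤ) (hd : d = Int.gcd (2*(p+q)) (p+q+p'))
    (ha : a = 2*(p+q) / d) (hb : b = (p+q+p') / d) :
    IsCoprime a b ∧
    Real.cos α = ((a:ℝ)^2 + 2*(a:ℝ)*(b:ℝ) - 2*(b:ℝ)^2) /
      (2*((a:ℝ)^2 - (a:ℝ)*(b:ℝ) + (b:ℝ)^2)) ∧
    Real.sqrt 3 * Real.sin α = 3*(a:ℝ)*(2*(b:ℝ) - (a:ℝ)) /
      (2*((a:ℝ)^2 - (a:ℝ)*(b:ℝ) + (b:ℝ)^2)) :=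
  stmt4_general p q p' hp hq hpyth α hcos hsin d a b hd ha hb
end

section
/- Let α satisfy cos α = √13/4 and √3 sin α = 3/4. Then for integers n₁, n₂, n₄, n₅, the two conditions 2n₁n₄ + 2n₂n₅ − n₁n₅ − n₂n₄ = 0 and 3(n₂n₄ − n₁n₅) + 4(n₁² + n₂² + n₄² + n₅² − n₁n₂ − n₄n₅) = 4 hold if and only if (n₁, n₂, n₄, n₅) is one of: (±1,0,0,0), (0,±1,0,0), (0,0,±1,0), (0,0,0,±1), ±(1,1,0,0), ±(0,0,1,1). -/
open Real

set_option maxHeartbeats 2000000 in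
lemma stmt7_aux (n₁ n₂ n₄ n₅ : ℤ)
    (h1 : 2*n₁*n₄ + 2*n₂*n₅ - n₁*n₅ - n₂*n₄ = 0)
    (h2 : 3*(n₂*n₄ - n₁*n₅) + 4*(n₁^2 + n₂^2 + n₄^2 + n₅^2 - n₁*n₂ - n₄*n₅) = 4) :
    ((n₁, n₂, n₄, n₅) = ((1:ℤ), (0:ℤ), (0:ℤ), (0:ℤ)) ∨
     (n₁, n₂, n₄, n₅) = (-1, 0, 0, 0) ∨
     (n₁, n₂, n₄, n₅) = (0, 1, 0, 0) ∨
     (n₁, n₂, n₄, n₅) = (0, -1, 0, 0) ∨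
     (n₁, n₂, n₄, n₅) = (0, 0, 1, 0) ∨
     (n₁, n₂, n₄, n₅) = (0, 0, -1, 0) ∨
     (n₁, n₂, n₄, n₅) = (0, 0, 0, 1) ∨
     (n₁, n₂, n₄, n₅) = (0, 0, 0, -1) ∨
     (n₁, n₂, n₄, n₅) = (1, 1, 0, 0) ∨
     (n₁, n₂, n₄, n₅) = (-1, -1, 0, 0) ∨
     (n₁, n₂, n₄, n₅) = (0, 0, 1, 1) ∨
     (n₁, n₂, n₄, n₅) = (0, 0, -1, -1)) := by
  have hS : n₁^2 + n₂^2 + n₄^2 + n₅^2 ≤ 8 := by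
    nlinarith [sq_nonneg (n₁ - n₂), sq_nonneg (n₄ - n₅), sq_nonneg (n₂ + n₄),
      sq_nonneg (n₁ - n₅)]
  have b1 : -2 ≤ n₁ ∧ n₁ ≤ 2 := by constructor <;> nlinarith [sq_nonneg n₂, sq_nonneg n₄, sq_nonneg n₅]
  have b2 : -2 ≤ n₂ ∧ n₂ ≤ 2 := by constructor <;> nlinarith [sq_nonneg n₁, sq_nonneg n₄, sq_nonneg n₅]
  have b4 : -2 ≤ n₄ ∧ n₄ ≤ 2 := by constructor <;> nlinarith [sq_nonneg n₁, sq_nonneg n₂, sq_nonneg n₅]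
  have b5 : -2 ≤ n₅ ∧ n₅ ≤ 2 := by constructor <;> nlinarith [sq_nonneg n₁, sq_nonneg n₂, sq_nonneg n₄]
  obtain ⟨l1, u1⟩ := b1; obtain ⟨l2, u2⟩ := b2
  obtain ⟨l4, u4⟩ := b4; obtain ⟨l5, u5⟩ := b5
  simp only [Prod.mk.injEq]
  interval_cases n₁ <;> interval_cases n₂ <;> interval_cases n₄ <;> interval_cases n₅ <;>
    omega

/-- For `α` with `cos α = √13/4` and `√3 sin α = 3/4`, the integer solutions of the two
Diophantine conditions coming from `|k(m)| = 1` are exactly the twelve basic quadruples. -/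
theorem stmt7 (α : ℝ) (hcos : Real.cos α = Real.sqrt 13 / 4)
    (hsin : Real.sqrt 3 * Real.sin α = 3/4)
    (n₁ n₂ n₄ n₅ : ℤ) :
    (2*n₁*n₄ + 2*n₂*n₅ - n₁*n₅ - n₂*n₄ = 0 ∧
     3*(n₂*n₄ - n₁*n₅) + 4*(n₁^2 + n₂^2 + n₄^2 + n₅^2 - n₁*n₂ - n₄*n₅) = 4) ↔
    ((n₁, n₂, n₄, n₅) = ((1:ℤ), (0:ℤ), (0:ℤ), (0:ℤ)) ∨
     (n₁, n₂, n₄, n₅) = (-1, 0, 0, 0) ∨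
     (n₁, n₂, n₄, n₅) = (0, 1, 0, 0) ∨
     (n₁, n₂, n₄, n₅) = (0, -1, 0, 0) ∨
     (n₁, n₂, n₄, n₅) = (0, 0, 1, 0) ∨
     (n₁, n₂, n₄, n₅) = (0, 0, -1, 0) ∨
     (n₁, n₂, n₄, n₅) = (0, 0, 0, 1) ∨
     (n₁, n₂, n₄, n₅) = (0, 0, 0, -1) ∨
     (n₁, n₂, n₄, n₅) = (1, 1, 0, 0) ∨
     (n₁, n₂, n₄, n₅) = (-1, -1, 0, 0) ∨
     (n₁, n₂, n₄, n₅) = (0, 0, 1, 1) ∨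
     (n₁, n₂, n₄, n₅) = (0, 0, -1, -1)) := by
  constructor
  · rintro ⟨h1, h2⟩
    exact stmt7_aux n₁ n₂ n₄ n₅ h1 h2
  · rintro (h|h|h|h|h|h|h|h|h|h|h|h) <;>
      (simp only [Prod.mk.injEq] at h; obtain ⟨rfl, rfl, rfl, rfl⟩ := h; norm_num)
end

section
/- Let α satisfy cos α = √13/4. There exists C′ > 0 such that for all integers n₁, n₂, n₄, n₅ not all zero with q₀ := 2n₁n₄ + 2n₂n₅ − n₁n₅ − n₂n₄ and q₁ := 3(n₂n₄ − n₁n₅) + 4(n₁² + n₂² + n₄² + n₅² − n₁n₂ − n₄n₅) − 4 not both zero, one has (q₀√13 + q₁)² ≥ C′²/(n₁² + n₂² + n₄² + n₅²)². -/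
set_option maxHeartbeats 1000000 in
/-- Diophantine estimate for the lattice with `cos α = √13/4`: there is `C′ > 0` such that
`(q₀√13 + q₁)² ≥ C′²/(n₁² + n₂² + n₄² + n₅²)²` for the quantities `q₀, q₁` associated to
nonzero integer quadruples. -/
theorem stmt10 (α : ℝ) (hcos : Real.cos α = Real.sqrt 13 / 4) :
    ∃ C : ℝ, 0 < C ∧ ∀ n₁ n₂ n₄ n₅ q₀ q₁ : ℤ,
      ¬(n₁ = 0 ∧ n₂ = 0 ∧ n₄ = 0 ∧ n₅ = 0) →
      q₀ = 2*n₁*n₄ + 2*n₂*n₅ - n₁*n₅ - n₂*n₄ →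
      q₁ = 3*(n₂*n₄ - n₁*n₅) + 4*(n₁^2 + n₂^2 + n₄^2 + n₅^2 - n₁*n₂ - n₄*n₅) - 4 →
      ¬(q₀ = 0 ∧ q₁ = 0) →
      C^2 / (((n₁:ℝ)^2 + (n₂:ℝ)^2 + (n₄:ℝ)^2 + (n₅:ℝ)^2)^2) ≤
        ((q₀:ℝ) * Real.sqrt 13 + (q₁:ℝ))^2 := by
  refine ⟨1/20, by norm_num, ?_⟩
  intro n₁ n₂ n₄ n₅ q₀ q₁ hnz hq₀ hq₁ hboth
  have hSz1 : (1:ℤ) ≤ n₁^2 + n₂^2 + n₄^2 + n₅^2 := by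
    by_contra h
    push_neg at h
    have h1 : n₁ = 0 := by
      have : n₁^2 = 0 := by nlinarith [sq_nonneg n₁, sq_nonneg n₂, sq_nonneg n₄, sq_nonneg n₅]
      exact pow_eq_zero_iff (by norm_num) |>.mp this
    have h2 : n₂ = 0 := by
      have : n₂^2 = 0 := by nlinarith [sq_nonneg n₁, sq_nonneg n₂, sq_nonneg n₄, sq_nonneg n₅]
      exact pow_eq_zero_iff (by norm_num) |>.mp this
    have h4 : n₄ = 0 := by
      have : n₄^2 = 0 := by nlinarith [sq_nonneg n₁, sq_nonneg n₂, sq_nonneg n₄, sq_nonneg n₅]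
      exact pow_eq_zero_iff (by norm_num) |>.mp this
    have h5 : n₅ = 0 := by
      have : n₅^2 = 0 := by nlinarith [sq_nonneg n₁, sq_nonneg n₂, sq_nonneg n₄, sq_nonneg n₅]
      exact pow_eq_zero_iff (by norm_num) |>.mp this
    exact hnz ⟨h1, h2, h4, h5⟩
  have hS1 : (1:ℝ) ≤ (n₁:ℝ)^2 + (n₂:ℝ)^2 + (n₄:ℝ)^2 + (n₅:ℝ)^2 := by exact_mod_cast hSz1
  have h13 : Real.sqrt 13 ^ 2 = 13 := Real.sq_sqrt (by norm_num)
  have h13nn : 0 ≤ Real.sqrt 13 := Real.sqrt_nonneg 13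
  have h13lt : Real.sqrt 13 < 4 := by nlinarith
  have hN : q₁^2 - 13*q₀^2 ≠ 0 := by
    intro h0
    rcases eq_or_ne q₀ 0 with hq0 | hq0
    · apply hboth
      refine ⟨hq0, ?_⟩
      have : q₁^2 = 0 := by rw [hq0] at h0; linarith
      exact pow_eq_zero_iff (by norm_num) |>.mp this
    · have hirr : Irrational (Real.sqrt 13) := (by norm_num : Nat.Prime 13).irrational_sqrt
      have hr : (q₁:ℝ)^2 = 13 * (q₀:ℝ)^2 := by exact_mod_cast (by linarith : q₁^2 = 13*q₀^2)
      have hq0R : (0:ℝ) < |(q₀:ℝ)| := by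
        simp only [abs_pos]
        exact_mod_cast hq0
      have hs : |(q₁:ℝ)| = Real.sqrt 13 * |(q₀:ℝ)| := by
        calc |(q₁:ℝ)| = Real.sqrt ((q₁:ℝ)^2) := (Real.sqrt_sq_eq_abs _).symm
        _ = Real.sqrt (13 * (q₀:ℝ)^2) := by rw [hr]
        _ = Real.sqrt 13 * Real.sqrt ((q₀:ℝ)^2) := Real.sqrt_mul (by norm_num) _
        _ = Real.sqrt 13 * |(q₀:ℝ)| := by rw [Real.sqrt_sq_eq_abs]
      apply hirr
      refine ⟨(q₁.natAbs : ℚ) / (q₀.natAbs : ℚ), ?_⟩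
      push_cast [Nat.cast_natAbs]
      rw [div_eq_iff (ne_of_gt hq0R)]
      exact hs
  have hNabs : (1:ℝ) ≤ |(q₁:ℝ)^2 - 13*(q₀:ℝ)^2| := by
    have h1 : (1:ℤ) ≤ |q₁^2 - 13*q₀^2| := Int.one_le_abs hN
    calc (1:ℝ) ≤ |((q₁^2 - 13*q₀^2 : ℤ) : ℝ)| := by exact_mod_cast h1
    _ = |(q₁:ℝ)^2 - 13*(q₀:ℝ)^2| := by push_cast; ring_nf
  have hxy : ((q₀:ℝ) * Real.sqrt 13 + (q₁:ℝ)) * ((q₁:ℝ) - (q₀:ℝ) * Real.sqrt 13)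
      = (q₁:ℝ)^2 - 13*(q₀:ℝ)^2 := by nlinarith [h13]
  have hq0b : |(q₀:ℝ)| ≤ 3/2 * ((n₁:ℝ)^2 + (n₂:ℝ)^2 + (n₄:ℝ)^2 + (n₅:ℝ)^2) := by
    rw [abs_le, hq₀]
    constructor
    · push_cast
      nlinarith [sq_nonneg ((n₁:ℝ) + n₄), sq_nonneg ((n₂:ℝ) + n₅), sq_nonneg ((n₁:ℝ) - n₅),
        sq_nonneg ((n₂:ℝ) - n₄)]
    · push_cast
      nlinarith [sq_nonneg ((n₁:ℝ) - n₄), sq_nonneg ((n₂:ℝ) - n₅), sq_nonneg ((n₁:ℝ) + n₅),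
        sq_nonneg ((n₂:ℝ) + n₄)]
  have hq1b : |(q₁:ℝ)| ≤ 14 * ((n₁:ℝ)^2 + (n₂:ℝ)^2 + (n₄:ℝ)^2 + (n₅:ℝ)^2) := by
    rw [abs_le, hq₁]
    constructor
    · push_cast
      nlinarith [sq_nonneg ((n₂:ℝ) + n₄), sq_nonneg ((n₁:ℝ) - n₅), sq_nonneg ((n₁:ℝ) - n₂),
        sq_nonneg ((n₄:ℝ) - n₅), hS1]
    · push_cast
      nlinarith [sq_nonneg ((n₂:ℝ) - n₄), sq_nonneg ((n₁:ℝ) + n₅), sq_nonneg ((n₁:ℝ) + n₂),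
        sq_nonneg ((n₄:ℝ) + n₅), hS1]
  have hyb : |(q₁:ℝ) - (q₀:ℝ) * Real.sqrt 13|
      ≤ 20 * ((n₁:ℝ)^2 + (n₂:ℝ)^2 + (n₄:ℝ)^2 + (n₅:ℝ)^2) := by
    calc |(q₁:ℝ) - (q₀:ℝ) * Real.sqrt 13| ≤ |(q₁:ℝ)| + |(q₀:ℝ) * Real.sqrt 13| :=
          abs_sub (q₁:ℝ) _
    _ = |(q₁:ℝ)| + |(q₀:ℝ)| * Real.sqrt 13 := by rw [abs_mul, abs_of_nonneg h13nn]
    _ ≤ 14 * ((n₁:ℝ)^2 + (n₂:ℝ)^2 + (n₄:ℝ)^2 + (n₅:ℝ)^2)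
        + (3/2 * ((n₁:ℝ)^2 + (n₂:ℝ)^2 + (n₄:ℝ)^2 + (n₅:ℝ)^2)) * 4 := by
          gcongr
    _ = 20 * ((n₁:ℝ)^2 + (n₂:ℝ)^2 + (n₄:ℝ)^2 + (n₅:ℝ)^2) := by ring
  have hkey : (1:ℝ) ≤ |(q₀:ℝ) * Real.sqrt 13 + (q₁:ℝ)|
      * (20 * ((n₁:ℝ)^2 + (n₂:ℝ)^2 + (n₄:ℝ)^2 + (n₅:ℝ)^2)) := by
    calc (1:ℝ) ≤ |(q₁:ℝ)^2 - 13*(q₀:ℝ)^2| := hNabs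
    _ = |(q₀:ℝ) * Real.sqrt 13 + (q₁:ℝ)| * |(q₁:ℝ) - (q₀:ℝ) * Real.sqrt 13| := by
          rw [← hxy, abs_mul]
    _ ≤ |(q₀:ℝ) * Real.sqrt 13 + (q₁:ℝ)|
        * (20 * ((n₁:ℝ)^2 + (n₂:ℝ)^2 + (n₄:ℝ)^2 + (n₅:ℝ)^2)) := by
          gcongr
  rw [div_le_iff₀ (by positivity)]
  nlinarith [abs_nonneg ((q₀:ℝ) * Real.sqrt 13 + (q₁:ℝ)),
    sq_abs ((q₀:ℝ) * Real.sqrt 13 + (q₁:ℝ)), hkey, hS1]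
end
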